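/- In the loop-free multigraph game the Angel has a winning strategy: starting from any loop-free multigraph with a graphical degree sequence, if at each step an adversary selects an arbitrary edge of multiplicity at least two and the Angel responds by choosing a non-incident edge and performing a double edge swap on the pair, then the Angel can guarantee that a simple graph is reached after finitely many steps. -/
import Mathlib


open Finset

/-- A loopy multigraph on vertex set `V`: each unordered pair (possibly a loop)
has a multiplicity. -/
abbrev Multigraph (V : Type*) := Sym2 V → ℕ

variable {V : Type*}

/-- The degree of a vertex: each incident edge counts with multiplicity,
and a loop counts twice. -/
def mdeg [Fintype V] (G : Multigraph V) (v : V) : ℕ :=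
  (∑ u : V, G s(v, u)) + G s(v, v)

/-- A multigraph is simple if it has no loops and every multiplicity is at most one. -/
def IsSimpleMG (G : Multigraph V) : Prop :=
  (∀ v : V, G s(v, v) = 0) ∧ ∀ e : Sym2 V, G e ≤ 1

/-- A multigraph is loop-free if it has no loops. -/
def LoopFree (G : Multigraph V) : Prop := ∀ v : V, G s(v, v) = 0

/-- A degree function is graphical if it is realized by some simple graph. -/
def GraphicalDeg [Fintype V] (d : V → ℕ) : Prop :=
  ∃ H : Multigraph V, IsSimpleMG H ∧ ∀ v : V, mdeg H v = d v

/-- The result of the double edge swap removing one copy each of `{v1,v2}` and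
`{v3,v4}` and adding one copy each of `{v2,v3}` and `{v4,v1}`. -/
def swapped [DecidableEq V] (G : Multigraph V) (v1 v2 v3 v4 : V) : Multigraph V :=
  fun e => G e - (if e = s(v1, v2) then 1 else 0) - (if e = s(v3, v4) then 1 else 0)
    + (if e = s(v2, v3) then 1 else 0) + (if e = s(v4, v1) then 1 else 0)

/-- The edges `{v1,v2}` and `{v3,v4}` share no vertex. -/
def NotIncident (v1 v2 v3 v4 : V) : Prop :=
  v1 ≠ v3 ∧ v1 ≠ v4 ∧ v2 ≠ v3 ∧ v2 ≠ v4

/-- One admissible double edge swap: the two removed edges exist, are not incident,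
and at least one of them is a loop or has multiplicity at least two. -/
def AdmissibleStep [DecidableEq V] (G G' : Multigraph V) : Prop :=
  ∃ v1 v2 v3 v4 : V, NotIncident v1 v2 v3 v4 ∧
    1 ≤ G s(v1, v2) ∧ 1 ≤ G s(v3, v4) ∧
    (v1 = v2 ∨ v3 = v4 ∨ 2 ≤ G s(v1, v2) ∨ 2 ≤ G s(v3, v4)) ∧
    G' = swapped G v1 v2 v3 v4

/-- The Angel wins the loop-free multigraph game from `G`: either `G` is simple, or
for every Devil choice of a multiple edge `{v1,v2}` the Angel can pick a non-incident
edge `{v3,v4}`, swap, and still be winning. (Being an inductive predicate, this means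
the Angel forces a simple graph in finitely many steps.) -/
inductive AngelWinsLF {V : Type*} [DecidableEq V] : Multigraph V → Prop where
  | win (G : Multigraph V) : IsSimpleMG G → AngelWinsLF G
  | move (G : Multigraph V) (f3 f4 : V → V → V) :
      (∀ v1 v2 : V, v1 ≠ v2 → 2 ≤ G s(v1, v2) →
        NotIncident v1 v2 (f3 v1 v2) (f4 v1 v2) ∧ 1 ≤ G s(f3 v1 v2, f4 v1 v2)) →
      (∀ v1 v2 : V, v1 ≠ v2 → 2 ≤ G s(v1, v2) →
        AngelWinsLF (swapped G v1 v2 (f3 v1 v2) (f4 v1 v2))) →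
      AngelWinsLF G

-- ===== auxiliary lemmas =====

lemma sym2_ne {a b c d : V} (h1 : ¬(a = c ∧ b = d)) (h2 : ¬(a = d ∧ b = c)) :
    s(a,b) ≠ s(c,d) := by
  rw [Ne, Sym2.eq_iff]; tauto

def Phi [Fintype V] [DecidableEq V] (G H : Multigraph V) : ℕ :=
  ∑ e : Sym2 V, ((G e : ℤ) - (H e : ℤ)).natAbs

lemma swapped_cast [DecidableEq V] (G : Multigraph V) (v1 v2 v3 v4 : V)
    (h12 : 1 ≤ G s(v1,v2)) (hne : s(v1,v2) ≠ s(v3,v4)) (h34 : 1 ≤ G s(v3,v4)) (e : Sym2 V) :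
    ((swapped G v1 v2 v3 v4 e : ℤ)) =
      (G e : ℤ) - (if e = s(v1,v2) then 1 else 0) - (if e = s(v3,v4) then 1 else 0)
        + (if e = s(v2,v3) then 1 else 0) + (if e = s(v4,v1) then 1 else 0) := by
  simp only [swapped]
  rcases eq_or_ne e s(v1,v2) with h1 | h1
  · rcases eq_or_ne e s(v3,v4) with h2 | h2
    · exact absurd (h1.symm.trans h2) hne
    · subst h1
      simp only [if_neg h2, eq_self_iff_true, if_true]
      split_ifs <;> omega
  · rcases eq_or_ne e s(v3,v4) with h2 | h2
    · subst h2
      simp only [if_neg h1, eq_self_iff_true, if_true]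
      split_ifs <;> omega
    · simp only [if_neg h1, if_neg h2]
      split_ifs <;> omega

lemma sym2_indicator_sum [Fintype V] [DecidableEq V] (v a b : V) (hab : a ≠ b) :
    ∑ u : V, (if s(v,u) = s(a,b) then (1:ℤ) else 0) =
      (if v = a then 1 else 0) + (if v = b then 1 else 0) := by
  by_cases hva : v = a <;> by_cases hvb : v = b
  · exact absurd (hva.symm.trans hvb) hab
  · subst hva
    rw [Finset.sum_congr rfl (fun u _ => show (if s(v,u) = s(v,b) then (1:ℤ) else 0)
        = (if u = b then 1 else 0) by simp [Sym2.eq_iff, hvb])]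
    simp [hvb]
  · subst hvb
    rw [Finset.sum_congr rfl (fun u _ => show (if s(v,u) = s(a,v) then (1:ℤ) else 0)
        = (if u = a then 1 else 0) by simp [Sym2.eq_iff, hva])]
    simp [hva]
  · rw [Finset.sum_congr rfl (fun u _ => show (if s(v,u) = s(a,b) then (1:ℤ) else 0)
        = 0 by simp [Sym2.eq_iff, hva, hvb])]
    simp [hva, hvb]

lemma rowsum_swapped [Fintype V] [DecidableEq V] (G : Multigraph V) (v1 v2 v3 v4 : V)
    (h12 : v1 ≠ v2) (h34 : v3 ≠ v4) (hni : NotIncident v1 v2 v3 v4)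
    (he1 : 1 ≤ G s(v1,v2)) (he2 : 1 ≤ G s(v3,v4)) (v : V) :
    ∑ u : V, ((swapped G v1 v2 v3 v4 s(v, u) : ℤ)) = ∑ u : V, (G s(v, u) : ℤ) := by
  obtain ⟨n13, n14, n23, n24⟩ := hni
  have hne : s(v1,v2) ≠ s(v3,v4) := sym2_ne (fun h => n13 h.1) (fun h => n14 h.1)
  rw [Finset.sum_congr rfl (fun u _ => swapped_cast G v1 v2 v3 v4 he1 hne he2 s(v,u))]
  rw [Finset.sum_add_distrib, Finset.sum_add_distrib, Finset.sum_sub_distrib,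
      Finset.sum_sub_distrib, sym2_indicator_sum v v1 v2 h12, sym2_indicator_sum v v3 v4 h34,
      sym2_indicator_sum v v2 v3 n23, sym2_indicator_sum v v4 v1 (Ne.symm n14)]
  ring

lemma loopfree_swapped [DecidableEq V] (G : Multigraph V) (v1 v2 v3 v4 : V)
    (hlf : LoopFree G) (h23 : v2 ≠ v3) (h41 : v4 ≠ v1) :
    LoopFree (swapped G v1 v2 v3 v4) := by
  intro v
  have e1 : s(v,v) ≠ s(v2,v3) := sym2_ne (fun h => h23 (h.1.symm.trans h.2))
    (fun h => h23 (h.2.symm.trans h.1))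
  have e2 : s(v,v) ≠ s(v4,v1) := sym2_ne (fun h => h41 (h.1.symm.trans h.2))
    (fun h => h41 (h.2.symm.trans h.1))
  simp [swapped, hlf v, e1, e2]

lemma sum_four [Fintype V] [DecidableEq V] (f g : Sym2 V → ℕ) (a b c d : Sym2 V)
    (hab : a ≠ b) (hac : a ≠ c) (had : a ≠ d) (hbc : b ≠ c) (hbd : b ≠ d) (hcd : c ≠ d)
    (hout : ∀ e, e ≠ a → e ≠ b → e ≠ c → e ≠ d → f e = g e)
    (hin : f a + f b + f c + f d + 2 ≤ g a + g b + g c + g d) :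
    (∑ e : Sym2 V, f e) + 2 ≤ ∑ e : Sym2 V, g e := by
  have h1 : ∀ h : Sym2 V → ℕ, ∑ e : Sym2 V, h e =
      (∑ e ∈ (univ \ {a,b,c,d} : Finset (Sym2 V)), h e) + (h a + h b + h c + h d) := by
    intro h
    rw [← Finset.sum_sdiff (Finset.subset_univ ({a,b,c,d} : Finset (Sym2 V)))]
    congr 1
    rw [show ({a,b,c,d} : Finset (Sym2 V)) = insert a (insert b (insert c {d})) from rfl]
    rw [Finset.sum_insert (by simp [hab, hac, had]), Finset.sum_insert (by simp [hbc, hbd]),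
        Finset.sum_insert (by simp [hcd]), Finset.sum_singleton]
    ring
  rw [h1 f, h1 g]
  have h2 : (∑ e ∈ (univ \ {a,b,c,d} : Finset (Sym2 V)), f e) =
      ∑ e ∈ (univ \ {a,b,c,d} : Finset (Sym2 V)), g e := by
    refine Finset.sum_congr rfl (fun e he => ?_)
    simp only [Finset.mem_sdiff, Finset.mem_insert, Finset.mem_singleton] at he
    push_neg at he
    exact hout e he.2.1 he.2.2.1 he.2.2.2.1 he.2.2.2.2
  omega

lemma key_lemma [Fintype V] [DecidableEq V] (G H : Multigraph V) (hlf : LoopFree G)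
    (hH : IsSimpleMG H)
    (hrow : ∀ v : V, ∑ u : V, ((G s(v,u) : ℤ) - (H s(v,u) : ℤ)) = 0)
    (v1 v2 : V) (h12 : v1 ≠ v2) (hm : 2 ≤ G s(v1,v2)) :
    ∃ v3 v4 : V, NotIncident v1 v2 v3 v4 ∧ v3 ≠ v4 ∧ 1 ≤ G s(v3,v4) ∧
      Phi (swapped G v1 v2 v3 v4) H + 2 ≤ Phi G H := by
  by_contra hstuck
  push_neg at hstuck
  -- basic facts
  have hDe : 1 ≤ (G s(v1,v2) : ℤ) - (H s(v1,v2) : ℤ) := by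
    have := hH.2 s(v1,v2); omega
  -- surplus existence
  have pos_exists : ∀ v w : V, (G s(v,w) : ℤ) - (H s(v,w) : ℤ) ≤ -1 →
      ∃ c : V, 1 ≤ (G s(v,c) : ℤ) - (H s(v,c) : ℤ) := by
    intro v w hw
    by_contra hc
    push_neg at hc
    have h2 : ∑ u : V, ((G s(v,u) : ℤ) - (H s(v,u) : ℤ)) ≤
        ∑ u : V, (if u = w then (-1 : ℤ) else 0) := by
      apply Finset.sum_le_sum
      intro u _
      by_cases hu : u = w
      · subst hu; simp [hw]
      · have := hc u; simp [hu]; omega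
    have h3 : ∑ u : V, (if u = w then (-1:ℤ) else 0) = -1 := by simp
    have h4 := hrow v
    omega
  -- the generic "a valid move exists" contradiction
  have mkmove : ∀ v3 v4 : V, NotIncident v1 v2 v3 v4 → v3 ≠ v4 → 1 ≤ G s(v3,v4) →
      Phi (swapped G v1 v2 v3 v4) H + 2 ≤ Phi G H → False := by
    intro v3 v4 hni hne34 hg hp
    exact absurd hp (by have := hstuck v3 v4 hni hne34 hg; omega)
  -- Fact 1 : a deficit neighbour of v1 is a surplus neighbour of v2
  have fact1 : ∀ x : V, x ≠ v1 → x ≠ v2 → (G s(v1,x) : ℤ) - (H s(v1,x) : ℤ) ≤ -1 →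
      1 ≤ (G s(v2,x) : ℤ) - (H s(v2,x) : ℤ) := by
    intro x hx1 hx2 hx
    obtain ⟨c, hc⟩ := pos_exists x v1 (by rw [Sym2.eq_swap]; exact hx)
    have hcx : c ≠ x := by
      intro h; rw [h] at hc; rw [hlf x, hH.1 x] at hc; omega
    have hcv1 : c ≠ v1 := by
      intro h; rw [h, Sym2.eq_swap] at hc; omega
    by_cases hcv2 : c = v2
    · rw [hcv2] at hc; rw [Sym2.eq_swap]; exact hc
    · exfalso
      -- move (v3, v4) = (c, x)
      have hgcx : 1 ≤ G s(c,x) := by rw [Sym2.eq_swap] at hc; omega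
      have hni : NotIncident v1 v2 c x :=
        ⟨Ne.symm hcv1, Ne.symm hx1, Ne.symm hcv2, Ne.symm hx2⟩
      apply mkmove c x hni hcx hgcx
      -- Phi drops by 2
      have d1 : s(v1,v2) ≠ s(c,x) :=
        sym2_ne (fun h => hcv1 h.1.symm) (fun h => hcv2 h.2.symm)
      have d2 : s(v1,v2) ≠ s(v2,c) :=
        sym2_ne (fun h => h12 h.1) (fun h => hcv1 h.1.symm)
      have d3 : s(v1,v2) ≠ s(x,v1) :=
        sym2_ne (fun h => hx1 h.1.symm) (fun h => hx2 h.2.symm)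
      have d4 : s(c,x) ≠ s(v2,c) :=
        sym2_ne (fun h => hcv2 h.1) (fun h => hx2 h.2)
      have d5 : s(c,x) ≠ s(x,v1) :=
        sym2_ne (fun h => hcx h.1) (fun h => hcv1 h.1)
      have d6 : s(v2,c) ≠ s(x,v1) :=
        sym2_ne (fun h => hcv1 h.2) (fun h => h12 h.1.symm)
      have ha : ((swapped G v1 v2 c x s(v1,v2) : ℕ) : ℤ) = (G s(v1,v2) : ℤ) - 1 := by
        rw [swapped_cast G v1 v2 c x (by omega) d1 hgcx,
          if_pos rfl, if_neg d1, if_neg d2, if_neg d3]; ring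
      have hb : ((swapped G v1 v2 c x s(c,x) : ℕ) : ℤ) = (G s(c,x) : ℤ) - 1 := by
        rw [swapped_cast G v1 v2 c x (by omega) d1 hgcx,
          if_pos rfl, if_neg (Ne.symm d1), if_neg d4, if_neg d5]; ring
      have hcc : ((swapped G v1 v2 c x s(v2,c) : ℕ) : ℤ) = (G s(v2,c) : ℤ) + 1 := by
        rw [swapped_cast G v1 v2 c x (by omega) d1 hgcx,
          if_pos rfl, if_neg (Ne.symm d2), if_neg (Ne.symm d4), if_neg d6]; ring
      have hd : ((swapped G v1 v2 c x s(x,v1) : ℕ) : ℤ) = (G s(x,v1) : ℤ) + 1 := by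
        rw [swapped_cast G v1 v2 c x (by omega) d1 hgcx,
          if_pos rfl, if_neg (Ne.symm d3), if_neg (Ne.symm d5), if_neg (Ne.symm d6)]; ring
      show Phi (swapped G v1 v2 c x) H + 2 ≤ Phi G H
      unfold Phi
      apply sum_four _ _ s(v1,v2) s(c,x) s(v2,c) s(x,v1) d1 d2 d3 d4 d5 d6
      · intro e h1 h2 h3 h4
        have : swapped G v1 v2 c x e = G e := by simp [swapped, h1, h2, h3, h4]
        rw [this]
      · rw [ha, hb, hcc, hd]
        rw [Sym2.eq_swap (a := x) (b := c)] at hc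
        have hx' : (G s(x,v1) : ℤ) - (H s(x,v1) : ℤ) ≤ -1 := by
          rw [Sym2.eq_swap]; exact hx
        have l1 := hH.2 s(v2,c)
        have l2 := hH.2 s(x,v1)
        omega
  -- Fact 2 : a deficit neighbour of v2 is a surplus neighbour of v1
  have fact2 : ∀ x : V, x ≠ v1 → x ≠ v2 → (G s(v2,x) : ℤ) - (H s(v2,x) : ℤ) ≤ -1 →
      1 ≤ (G s(v1,x) : ℤ) - (H s(v1,x) : ℤ) := by
    intro x hx1 hx2 hx
    obtain ⟨c, hc⟩ := pos_exists x v2 (by rw [Sym2.eq_swap]; exact hx)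
    have hcx : c ≠ x := by
      intro h; rw [h] at hc; rw [hlf x, hH.1 x] at hc; omega
    have hcv2 : c ≠ v2 := by
      intro h; rw [h, Sym2.eq_swap] at hc; omega
    by_cases hcv1 : c = v1
    · rw [hcv1] at hc; rw [Sym2.eq_swap]; exact hc
    · exfalso
      -- move (v3, v4) = (x, c)
      have hgxc : 1 ≤ G s(x,c) := by omega
      have hni : NotIncident v1 v2 x c :=
        ⟨Ne.symm hx1, Ne.symm hcv1, Ne.symm hx2, Ne.symm hcv2⟩
      apply mkmove x c hni (Ne.symm hcx) hgxc
      have d1 : s(v1,v2) ≠ s(x,c) :=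
        sym2_ne (fun h => hx1 h.1.symm) (fun h => hcv1 h.1.symm)
      have d2 : s(v1,v2) ≠ s(v2,x) :=
        sym2_ne (fun h => h12 h.1) (fun h => hx1 h.1.symm)
      have d3 : s(v1,v2) ≠ s(c,v1) :=
        sym2_ne (fun h => hcv1 h.1.symm) (fun h => hcv2 h.2.symm)
      have d4 : s(x,c) ≠ s(v2,x) :=
        sym2_ne (fun h => hx2 h.1) (fun h => hcv2 h.2)
      have d5 : s(x,c) ≠ s(c,v1) :=
        sym2_ne (fun h => hcv1 h.2) (fun h => hx1 h.1)
      have d6 : s(v2,x) ≠ s(c,v1) :=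
        sym2_ne (fun h => hx1 h.2) (fun h => h12 h.1.symm)
      have ha : ((swapped G v1 v2 x c s(v1,v2) : ℕ) : ℤ) = (G s(v1,v2) : ℤ) - 1 := by
        rw [swapped_cast G v1 v2 x c (by omega) d1 hgxc,
          if_pos rfl, if_neg d1, if_neg d2, if_neg d3]; ring
      have hb : ((swapped G v1 v2 x c s(x,c) : ℕ) : ℤ) = (G s(x,c) : ℤ) - 1 := by
        rw [swapped_cast G v1 v2 x c (by omega) d1 hgxc,
          if_pos rfl, if_neg (Ne.symm d1), if_neg d4, if_neg d5]; ring
      have hcc : ((swapped G v1 v2 x c s(v2,x) : ℕ) : ℤ) = (G s(v2,x) : ℤ) + 1 := by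
        rw [swapped_cast G v1 v2 x c (by omega) d1 hgxc,
          if_pos rfl, if_neg (Ne.symm d2), if_neg (Ne.symm d4), if_neg d6]; ring
      have hd : ((swapped G v1 v2 x c s(c,v1) : ℕ) : ℤ) = (G s(c,v1) : ℤ) + 1 := by
        rw [swapped_cast G v1 v2 x c (by omega) d1 hgxc,
          if_pos rfl, if_neg (Ne.symm d3), if_neg (Ne.symm d5), if_neg (Ne.symm d6)]; ring
      show Phi (swapped G v1 v2 x c) H + 2 ≤ Phi G H
      unfold Phi
      apply sum_four _ _ s(v1,v2) s(x,c) s(v2,x) s(c,v1) d1 d2 d3 d4 d5 d6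
      · intro e h1 h2 h3 h4
        have : swapped G v1 v2 x c e = G e := by simp [swapped, h1, h2, h3, h4]
        rw [this]
      · rw [ha, hb, hcc, hd]
        have l1 := hH.2 s(v2,x)
        have l2 := hH.2 s(c,v1)
        omega
  -- final counting contradiction
  have hw : ∀ u : V, u ≠ v1 → u ≠ v2 →
      0 ≤ ((G s(v1,u) : ℤ) - (H s(v1,u) : ℤ)) + ((G s(v2,u) : ℤ) - (H s(v2,u) : ℤ)) := by
    intro u h1 h2
    have l1 := hH.2 s(v1,u)
    have l2 := hH.2 s(v2,u)
    by_cases c1 : (G s(v1,u) : ℤ) - (H s(v1,u) : ℤ) ≤ -1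
    · have := fact1 u h1 h2 c1; omega
    · by_cases c2 : (G s(v2,u) : ℤ) - (H s(v2,u) : ℤ) ≤ -1
      · have := fact2 u h1 h2 c2; omega
      · omega
  have hsum : ∑ u : V, (((G s(v1,u) : ℤ) - (H s(v1,u) : ℤ))
      + ((G s(v2,u) : ℤ) - (H s(v2,u) : ℤ))) = 0 := by
    rw [Finset.sum_add_distrib, hrow v1, hrow v2]
    ring
  have hsplit := Finset.sum_sdiff (f := fun u : V => ((G s(v1,u) : ℤ) - (H s(v1,u) : ℤ))
      + ((G s(v2,u) : ℤ) - (H s(v2,u) : ℤ))) (Finset.subset_univ ({v1, v2} : Finset V))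
  have hpair : ∑ u ∈ ({v1,v2} : Finset V), (((G s(v1,u) : ℤ) - (H s(v1,u) : ℤ))
      + ((G s(v2,u) : ℤ) - (H s(v2,u) : ℤ))) =
      (((G s(v1,v1) : ℤ) - (H s(v1,v1) : ℤ)) + ((G s(v2,v1) : ℤ) - (H s(v2,v1) : ℤ)))
      + (((G s(v1,v2) : ℤ) - (H s(v1,v2) : ℤ)) + ((G s(v2,v2) : ℤ) - (H s(v2,v2) : ℤ))) :=
    Finset.sum_pair h12
  have hrest : 0 ≤ ∑ u ∈ (univ \ ({v1,v2} : Finset V)), (((G s(v1,u) : ℤ) - (H s(v1,u) : ℤ))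
      + ((G s(v2,u) : ℤ) - (H s(v2,u) : ℤ))) := by
    apply Finset.sum_nonneg
    intro u hu
    simp only [Finset.mem_sdiff, Finset.mem_insert, Finset.mem_singleton] at hu
    push_neg at hu
    exact hw u hu.2.1 hu.2.2
  have e1 : (G s(v1,v1) : ℤ) - (H s(v1,v1) : ℤ) = 0 := by rw [hlf v1, hH.1 v1]; ring
  have e2 : (G s(v2,v2) : ℤ) - (H s(v2,v2) : ℤ) = 0 := by rw [hlf v2, hH.1 v2]; ring
  have e3 : 1 ≤ (G s(v2,v1) : ℤ) - (H s(v2,v1) : ℤ) := by rw [Sym2.eq_swap]; exact hDe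
  rw [hsum, hpair] at hsplit
  linarith [hrest, e1, e2, e3, hDe, hsplit]

lemma angel_aux [Fintype V] [DecidableEq V] (H : Multigraph V) (hH : IsSimpleMG H) :
    ∀ n : ℕ, ∀ G : Multigraph V, LoopFree G →
      (∀ v : V, ∑ u : V, ((G s(v,u) : ℤ) - (H s(v,u) : ℤ)) = 0) →
      Phi G H ≤ n → AngelWinsLF G := by
  intro n
  induction n using Nat.strong_induction_on with
  | _ n IH =>
    intro G hlf hrow hphi
    by_cases hs : IsSimpleMG G
    · exact AngelWinsLF.win G hs
    · have key2 : ∀ v1 v2 : V, ∃ p : V × V, ∀ (_ : v1 ≠ v2) (_ : 2 ≤ G s(v1,v2)),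
          NotIncident v1 v2 p.1 p.2 ∧ p.1 ≠ p.2 ∧ 1 ≤ G s(p.1,p.2) ∧
          Phi (swapped G v1 v2 p.1 p.2) H + 2 ≤ Phi G H := by
        intro v1 v2
        by_cases h : v1 ≠ v2 ∧ 2 ≤ G s(v1,v2)
        · obtain ⟨v3, v4, hc⟩ := key_lemma G H hlf hH hrow v1 v2 h.1 h.2
          exact ⟨(v3,v4), fun _ _ => hc⟩
        · exact ⟨(v1,v1), fun h1 h2 => absurd ⟨h1,h2⟩ h⟩
      choose f hf using key2
      apply AngelWinsLF.move G (fun a b => (f a b).1) (fun a b => (f a b).2)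
      · intro v1 v2 h1 h2
        obtain ⟨hni, _, hg, _⟩ := hf v1 v2 h1 h2
        exact ⟨hni, hg⟩
      · intro v1 v2 h1 h2
        obtain ⟨hni, hne34, hg, hp⟩ := hf v1 v2 h1 h2
        apply IH (Phi (swapped G v1 v2 (f v1 v2).1 (f v1 v2).2) H) (by omega)
        · exact loopfree_swapped G _ _ _ _ hlf hni.2.2.1 (Ne.symm hni.2.1)
        · intro v
          rw [Finset.sum_sub_distrib,
            rowsum_swapped G v1 v2 (f v1 v2).1 (f v1 v2).2 h1 hne34 hni (by omega) hg v,
            ← Finset.sum_sub_distrib]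
          exact hrow v
        · exact le_refl _


/-- In the loop-free multigraph game, starting from any loop-free
multigraph with graphical degree sequence, the Angel has a winning strategy. -/
theorem angel_wins_loopfree_game [Fintype V] [DecidableEq V]
    (G : Multigraph V) (hlf : LoopFree G) (hgr : GraphicalDeg (mdeg G)) :
    AngelWinsLF G := by
  obtain ⟨H, hH, hdeg⟩ := hgr
  have hrow : ∀ v : V, ∑ u : V, ((G s(v,u) : ℤ) - (H s(v,u) : ℤ)) = 0 := by
    intro v
    have h1 := hdeg v
    unfold mdeg at h1
    rw [hlf v, hH.1 v] at h1
    have h2 : ∑ u : V, H s(v,u) = ∑ u : V, G s(v,u) := by omega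
    rw [Finset.sum_sub_distrib]
    rw [← Nat.cast_sum, ← Nat.cast_sum, h2]
    ring
  exact angel_aux H hH (Phi G H) G hlf hrow (le_refl _)
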